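/- There is no smooth map u : Δ → ℂ from the closed unit disc to ℂ with u(1) = 0, u(∂Δ) contained in a bounded set of diameter R, satisfying the inhomogeneous Cauchy–Riemann equation ∂̄u = B for a constant B ∈ ℂ with |B| sufficiently large (|B| > C·R for a universal constant C). -/

import Mathlib

open Metric

/-- The inhomogeneous Cauchy–Riemann operator `∂̄u = ½(∂u/∂x + i ∂u/∂y)`. -/
noncomputable def dbar (u : ℂ → ℂ) (z : ℂ) : ℂ :=
  (1 / 2 : ℂ) * (fderiv ℝ u z 1 + Complex.I * fderiv ℝ u z Complex.I)

/-- **No solutions of `∂̄u = B` with small boundary oscillation for large `B`.**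
There is a universal constant `C > 0` such that: no map `u`, smooth on a
neighbourhood of the closed unit disc, with `u(1) = 0`, whose boundary values
`u(∂Δ)` lie in a set of diameter `≤ R`, can satisfy `∂̄u = B` on the closed
disc for a constant `B ∈ ℂ` with `|B| > C·R`. -/
theorem stmt5 :
    ∃ C : ℝ, 0 < C ∧
      ∀ (R : ℝ) (B : ℂ) (u : ℂ → ℂ),
        (∃ V : Set ℂ, IsOpen V ∧ closedBall (0 : ℂ) 1 ⊆ V ∧ ContDiffOn ℝ (⊤ : ℕ∞) u V) →
        u 1 = 0 →
        (∀ z w : ℂ, ‖z‖ = 1 → ‖w‖ = 1 → ‖u z - u w‖ ≤ R) →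
        (∀ z ∈ closedBall (0 : ℂ) 1, dbar u z = B) →
        C * R < ‖B‖ → False := by
  refine ⟨1, one_pos, ?_⟩
  rintro R B u ⟨V, hV, hsub, hC⟩ hu1 hosc hdb hlt
  -- the auxiliary function
  set v : ℂ → ℂ := fun z => u z - B * (starRingEnd ℂ) z with hv
  -- u is continuous on the closed ball
  have hucont : ContinuousOn u (closedBall (0:ℂ) 1) := (hC.continuousOn).mono hsub
  have hvcont : ContinuousOn v (closedBall (0:ℂ) 1) :=
    hucont.sub (continuousOn_const.mul (Complex.continuous_conj.continuousOn))
  -- v is complex differentiable on the open ball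
  have hvdiff : ∀ z ∈ ball (0:ℂ) 1, DifferentiableAt ℂ v z := by
    intro z hz
    have hzV : V ∈ nhds z := hV.mem_nhds (hsub (ball_subset_closedBall hz))
    have hud : DifferentiableAt ℝ u z :=
      ((hC.contDiffAt hzV).differentiableAt (by simp))
    set L := fderiv ℝ u z with hL
    have hu' : HasFDerivAt u L z := hud.hasFDerivAt
    have hconj : HasFDerivAt (fun w => B * (starRingEnd ℂ) w)
        (B • (Complex.conjCLE : ℂ ≃L[ℝ] ℂ).toContinuousLinearMap) z :=
      (Complex.conjCLE.hasFDerivAt).const_mul B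
    have hvF : HasFDerivAt v (L - B • (Complex.conjCLE : ℂ ≃L[ℝ] ℂ).toContinuousLinearMap) z :=
      hu'.sub hconj
    set a := L 1 with ha
    -- Cauchy-Riemann relation
    have h2 : Complex.I * L Complex.I = 2 * B - a := by
      have := hdb z (ball_subset_closedBall hz)
      simp only [dbar, ← hL] at this
      linear_combination 2 * this
    have hLI : L Complex.I = -Complex.I * (2 * B - a) := by
      refine mul_left_cancel₀ Complex.I_ne_zero ?_
      rw [h2]
      linear_combination (2 * B - a) * Complex.I_sq
    -- the real derivative is complex linear
    refine ⟨(a - B) • (1 : ℂ →L[ℂ] ℂ), hasFDerivAt_of_restrictScalars ℝ hvF ?_⟩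
    ext w
    have hw : w = w.re • (1:ℂ) + w.im • Complex.I := by
      simp [Complex.real_smul, Complex.re_add_im]
    rw [ContinuousLinearMap.coe_restrictScalars']
    show (a - B) • (1 : ℂ →L[ℂ] ℂ) w =
      (L - B • (Complex.conjCLE : ℂ ≃L[ℝ] ℂ).toContinuousLinearMap) w
    conv_rhs => rw [hw]
    simp only [ContinuousLinearMap.sub_apply, map_add, map_smul,
      ContinuousLinearMap.smul_apply, ContinuousLinearEquiv.coe_coe,
      Complex.conjCLE_apply, map_one, Complex.conj_I,
      ContinuousLinearMap.one_apply, smul_eq_mul]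
    rw [hLI]
    conv_lhs => rw [hw]
    simp only [Complex.real_smul, smul_eq_mul]
    ring
  -- Cauchy-Goursat: the circle integral of v vanishes
  have h0 : (∮ z in C((0:ℂ), 1), v z) = 0 :=
    Complex.circleIntegral_eq_zero_of_differentiable_on_off_countable zero_le_one
      Set.countable_empty hvcont (fun z hz => hvdiff z hz.1)
  -- integrability
  have hiu : CircleIntegrable u (0:ℂ) 1 :=
    (hucont.mono (sphere_subset_closedBall)).circleIntegrable zero_le_one
  have hic : CircleIntegrable (fun z => B * (starRingEnd ℂ) z) (0:ℂ) 1 :=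
    ((continuous_const.mul Complex.continuous_conj).continuousOn).circleIntegrable zero_le_one
  -- the integral of B * conj z
  have hconjint : (∮ z in C((0:ℂ), 1), B * (starRingEnd ℂ) z) = B * (2 * Real.pi * Complex.I) := by
    have heq : Set.EqOn (fun z => B * (starRingEnd ℂ) z) (fun z => B * (z - 0)⁻¹)
        (sphere (0:ℂ) 1) := by
      intro z hz
      have hz1 : ‖z‖ = 1 := by simpa using hz
      have hzne : z ≠ 0 := by
        intro h; rw [h] at hz1; simp at hz1
      have hmc : (starRingEnd ℂ) z * z = 1 := by
        rw [mul_comm, Complex.mul_conj]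
        norm_cast
        rw [Complex.normSq_eq_norm_sq, hz1, one_pow]
      have : (starRingEnd ℂ) z = z⁻¹ := eq_inv_of_mul_eq_one_left hmc
      simp [this]
    rw [circleIntegral.integral_congr zero_le_one heq,
      circleIntegral.integral_const_mul,
      circleIntegral.integral_sub_inv_of_mem_ball (mem_ball_self one_pos)]
  -- split the integral
  have hsplit : (∮ z in C((0:ℂ), 1), v z) =
      (∮ z in C((0:ℂ), 1), u z) - ∮ z in C((0:ℂ), 1), B * (starRingEnd ℂ) z :=
    circleIntegral.integral_sub hiu hic
  have hU : (∮ z in C((0:ℂ), 1), u z) = B * (2 * Real.pi * Complex.I) := by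
    rw [h0, hconjint] at hsplit
    exact sub_eq_zero.mp hsplit.symm
  -- norm bound on the boundary
  have hb : ∀ z ∈ sphere (0:ℂ) 1, ‖u z‖ ≤ R := by
    intro z hz
    have := hosc z 1 (by simpa using hz) (by simp)
    simpa [hu1] using this
  have hbound := circleIntegral.norm_integral_le_of_norm_le_const zero_le_one hb
  rw [hU] at hbound
  have hnorm : ‖B * (2 * (Real.pi:ℂ) * Complex.I)‖ = ‖B‖ * (2 * Real.pi) := by
    rw [norm_mul]
    congr 1
    simp [norm_mul, abs_of_nonneg Real.pi_nonneg]
  rw [hnorm] at hbound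
  nlinarith [Real.pi_pos]
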